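/- Let m ≥ 0 and x ∈ T outside Ĩ (radius 2r about x_I), t ∈ I (radius r about x_I, r < π/4). Let P_m(t) be the Taylor polynomial of order m at t = x_I of the function t ↦ 1/tan((x−t)/2). Then |1/tan((x−t)/2) − P_m(t)| ≤ C |t − x_I|^{m+1} / |x − x_I|^{m+2} ≤ C |I|^{m+1}/|x−x_I|^{m+2}. -/

import Mathlib

/-!
Write `f(u) = cot((x - u)/2)`. Since `cot' = -(1 + cot²)`, the derivatives of `f` are polynomials in
`f`: `f⁽ᵏ⁾(u) = 2⁻ᵏ Pₖ(cot((x - u)/2))` with `deg Pₖ ≤ k + 1`. On `0 < |y| ≤ 2` one has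
`|y| ≤ 3 |sin y|` (from `sin y ≥ y - y³/6`), hence `|cot y| ≤ 3/|y|`, and so
`|f⁽ᵏ⁾(u)| ≤ Cₖ / |x - u|^(k+1)` whenever `0 < |x - u| ≤ 4`. Every `u` between `x_I` and `t` satisfies
`|x - x_I|/2 ≤ |x - u| ≤ 5π/4 < 4`, so the Lagrange form of the Taylor remainder gives the estimate.
-/

open Real Set Polynomial
open scoped Nat

theorem Real.abs_le_three_mul_abs_sin {y : ℝ} (hy : |y| ≤ 2) : |y| ≤ 3 * |sin y| := by
  have key : ∀ z : ℝ, 0 ≤ z → z ≤ 2 → z ≤ 3 * sin z := fun z hz0 hz2 => by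
    nlinarith [sin_ge_sub_cube hz0, mul_nonneg hz0 (mul_nonneg hz0 (sub_nonneg.2 hz2))]
  rcases le_total 0 y with hy0 | hy0
  · rw [abs_of_nonneg hy0] at hy ⊢
    exact (key y hy0 hy).trans (by gcongr; exact le_abs_self _)
  · rw [abs_of_nonpos hy0] at hy ⊢
    have := key (-y) (by linarith) hy
    rw [sin_neg] at this
    exact this.trans (by gcongr; exact neg_le_abs _)

theorem Real.abs_cot_le {y : ℝ} (hy0 : y ≠ 0) (hy : |y| ≤ 2) : |cot y| ≤ 3 / |y| := by
  have hsin : 0 < |sin y| := by linarith [abs_le_three_mul_abs_sin hy, abs_pos.2 hy0]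
  rw [cot_eq_cos_div_sin, abs_div, div_le_div_iff₀ hsin (abs_pos.2 hy0)]
  nlinarith [abs_cos_le_one y, abs_le_three_mul_abs_sin hy, abs_nonneg y]

theorem Real.sin_ne_zero_of_abs_le_two {y : ℝ} (hy0 : y ≠ 0) (hy : |y| ≤ 2) : sin y ≠ 0 := by
  intro hsin
  have := abs_le_three_mul_abs_sin hy
  rw [hsin, abs_zero, mul_zero] at this
  exact hy0 (abs_nonpos_iff.1 this)

theorem Real.hasDerivAt_cot {y : ℝ} (hy : sin y ≠ 0) : HasDerivAt cot (-(1 + cot y ^ 2)) y := by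
  have hcot : cot = cos / sin := funext cot_eq_cos_div_sin
  refine hcot ▸ ((hasDerivAt_cos y).div (hasDerivAt_sin y) hy).congr_deriv ?_
  rw [Pi.div_apply]
  field_simp
  ring

theorem Real.contDiffAt_cot {n : WithTop ℕ∞} {y : ℝ} (hy : sin y ≠ 0) : ContDiffAt ℝ n cot y := by
  have hcot : cot = cos / sin := funext cot_eq_cos_div_sin
  rw [hcot]
  exact contDiff_cos.contDiffAt.div contDiff_sin.contDiffAt hy

theorem Polynomial.abs_eval_le {p : ℝ[X]} {d : ℕ} (hd : p.natDegree ≤ d) {B z : ℝ} (hB : 1 ≤ B)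
    (hz : |z| ≤ B) : |p.eval z| ≤ (∑ i ∈ Finset.range (d + 1), |p.coeff i|) * B ^ d := by
  rw [eval_eq_sum_range' (Nat.lt_succ_of_le hd), Finset.sum_mul]
  refine (Finset.abs_sum_le_sum_abs _ _).trans (Finset.sum_le_sum fun i hi => ?_)
  rw [abs_mul, abs_pow]
  gcongr
  exact (pow_le_pow_left₀ (abs_nonneg z) hz i).trans
    (pow_le_pow_right₀ hB (Nat.lt_succ_iff.1 (Finset.mem_range.1 hi)))

theorem abs_sub_taylorWithinEval_univ_le {f : ℝ → ℝ} {n : ℕ} {x₀ x M : ℝ}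
    (hf : ∀ y ∈ uIcc x₀ x, ContDiffAt ℝ (n + 1) f y)
    (hM : ∀ y ∈ uIcc x₀ x, |iteratedDeriv (n + 1) f y| ≤ M) :
    |f x - taylorWithinEval f n univ x₀ x| ≤ M * |x - x₀| ^ (n + 1) / (n + 1)! := by
  rcases eq_or_ne x₀ x with rfl | hne
  · simp [taylorWithinEval_self]
  have htaylor : taylorWithinEval f n (uIcc x₀ x) x₀ x = taylorWithinEval f n univ x₀ x := by
    simp only [taylor_within_apply, iteratedDerivWithin_univ]
    refine Finset.sum_congr rfl fun k hk => ?_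
    rw [iteratedDerivWithin_eq_iteratedDeriv (uniqueDiffOn_uIcc hne)
      ((hf x₀ left_mem_uIcc).of_le
        (by exact_mod_cast (Finset.mem_range.1 hk).le)) left_mem_uIcc]
  obtain ⟨y, hy, hrem⟩ := taylor_mean_remainder_lagrange_iteratedDeriv hne
    fun y hy => (hf y hy).contDiffWithinAt
  rw [← htaylor, hrem, abs_div, abs_mul, abs_pow, Nat.abs_cast]
  gcongr
  exact hM y (uIoo_subset_uIcc_self hy)

/-- `Pₖ₊₁ = Pₖ' · (1 + X²)`: the chain rule through `cot' = -(1 + cot²)` and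
`d/du (x - u)/2 = -1/2`. -/
noncomputable def cotPoly : ℕ → ℝ[X]
  | 0 => X
  | k + 1 => derivative (cotPoly k) * (1 + X ^ 2)

theorem natDegree_cotPoly_le (k : ℕ) : (cotPoly k).natDegree ≤ k + 1 := by
  induction k with
  | zero => exact natDegree_X_le
  | succ k ih =>
    have hderiv : (derivative (cotPoly k)).natDegree ≤ k :=
      (natDegree_derivative_le _).trans (by omega)
    have hquad : (1 + X ^ 2 : ℝ[X]).natDegree ≤ 2 := by
      refine (natDegree_add_le _ _).trans ?_
      simp
    rw [cotPoly]
    exact natDegree_mul_le.trans (by omega)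

theorem iteratedDeriv_cot_half_sub (x : ℝ) (k : ℕ) {u : ℝ} (hu : sin ((x - u) / 2) ≠ 0) :
    iteratedDeriv k (fun u => cot ((x - u) / 2)) u =
      (1 / 2) ^ k * (cotPoly k).eval (cot ((x - u) / 2)) := by
  induction k generalizing u with
  | zero => simp [cotPoly]
  | succ k ih =>
    have hnear : ∀ᶠ v in nhds u, sin ((x - v) / 2) ≠ 0 :=
      ContinuousAt.eventually_ne (by fun_prop) hu
    have hinner : HasDerivAt (fun v : ℝ => (x - v) / 2) (-1 / 2) u :=
      ((hasDerivAt_id u).const_sub x).div_const 2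
    have hcot : HasDerivAt (fun v => (cotPoly k).eval (cot ((x - v) / 2)))
        ((derivative (cotPoly k)).eval (cot ((x - u) / 2)) *
          (-(1 + cot ((x - u) / 2) ^ 2) * (-1 / 2))) u :=
      ((cotPoly k).hasDerivAt _).comp u
        ((hasDerivAt_cot hu).comp (h := fun v => (x - v) / 2) u hinner)
    rw [iteratedDeriv_succ, (Filter.EventuallyEq.deriv_eq (hnear.mono fun v hv => ih hv)),
      (hcot.const_mul _).deriv]
    simp only [cotPoly, eval_mul, eval_add, eval_one, eval_pow, eval_X]
    ring

theorem contDiffAt_cot_half_sub {n : WithTop ℕ∞} {x u : ℝ} (hxu : x ≠ u) (hle : |x - u| ≤ 4) :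
    ContDiffAt ℝ n (fun u => cot ((x - u) / 2)) u := by
  have hy0 : (x - u) / 2 ≠ 0 := div_ne_zero (sub_ne_zero.2 hxu) two_ne_zero
  have hy : |(x - u) / 2| ≤ 2 := by rw [abs_div, abs_two]; linarith
  exact (contDiffAt_cot (sin_ne_zero_of_abs_le_two hy0 hy)).comp (f := fun u => (x - u) / 2) u
    (by fun_prop)

theorem abs_iteratedDeriv_cot_half_sub_le (k : ℕ) :
    ∃ C > 0, ∀ x u : ℝ, x ≠ u → |x - u| ≤ 4 →
      |iteratedDeriv k (fun u => cot ((x - u) / 2)) u| ≤ C / |x - u| ^ (k + 1) := by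
  set A := ∑ i ∈ Finset.range (k + 2), |(cotPoly k).coeff i|
  have hA : 0 ≤ A := Finset.sum_nonneg fun i _ => abs_nonneg _
  refine ⟨(1 / 2) ^ k * (A + 1) * 6 ^ (k + 1), by positivity, fun x u hxu hle => ?_⟩
  have hy0 : (x - u) / 2 ≠ 0 := div_ne_zero (sub_ne_zero.2 hxu) two_ne_zero
  have hy : |(x - u) / 2| ≤ 2 := by rw [abs_div, abs_two]; linarith
  have hB : 1 ≤ 3 / |(x - u) / 2| := by
    rw [one_le_div (abs_pos.2 hy0)]; linarith
  have hpoly := abs_eval_le (natDegree_cotPoly_le k) hB (abs_cot_le hy0 hy)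
  rw [iteratedDeriv_cot_half_sub x k (sin_ne_zero_of_abs_le_two hy0 hy), abs_mul, abs_pow]
  calc |(1 / 2 : ℝ)| ^ k * |(cotPoly k).eval (cot ((x - u) / 2))|
      ≤ (1 / 2) ^ k * ((A + 1) * (3 / |(x - u) / 2|) ^ (k + 1)) := by
        rw [abs_of_pos one_half_pos]
        gcongr
        exact hpoly.trans (by gcongr; linarith)
    _ = (1 / 2) ^ k * (A + 1) * 6 ^ (k + 1) / |x - u| ^ (k + 1) := by
        rw [abs_div, abs_two, div_div_eq_mul_div, div_pow]
        ring

/-- **Taylor remainder estimate for the tangent kernel.** For every `m`, there is `C > 0` such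
that for `t` in the interval `I` of center `x_I` and radius `r < π/4` and `x` outside `Ĩ` (radius
`2r`, distances on the torus), the degree-`m` Taylor polynomial `P_m` at `x_I` of
`t ↦ 1/tan((x-t)/2)` satisfies
`|1/tan((x-t)/2) - P_m(t)| ≤ C |t-x_I|^{m+1}/|x-x_I|^{m+2} ≤ C |I|^{m+1}/|x-x_I|^{m+2}`. -/
theorem tan_kernel_taylor_remainder (m : ℕ) :
    ∃ C > 0, ∀ x_I r x t : ℝ, 0 < r → r < π / 4 →
      |t - x_I| ≤ r → 2 * r ≤ |x - x_I| → |x - x_I| ≤ π →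
      |1 / Real.tan ((x - t) / 2) -
          taylorWithinEval (fun u => 1 / Real.tan ((x - u) / 2)) m Set.univ x_I t| ≤
        C * |t - x_I| ^ (m + 1) / |x - x_I| ^ (m + 2) ∧
      C * |t - x_I| ^ (m + 1) / |x - x_I| ^ (m + 2) ≤
        C * (2 * r) ^ (m + 1) / |x - x_I| ^ (m + 2) := by
  obtain ⟨C₀, hC₀, hderiv⟩ := abs_iteratedDeriv_cot_half_sub_le (m + 1)
  refine ⟨2 ^ (m + 2) * C₀ / (m + 1)!, by positivity,
    fun x_I r x t hr hrπ htr hxr hxπ => ⟨?_, by gcongr; linarith⟩⟩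
  have hD : 0 < |x - x_I| := by linarith
  have hdist : ∀ u ∈ uIcc x_I t, |x - x_I| / 2 ≤ |x - u| ∧ |x - u| ≤ 4 := fun u hu => by
    have hu' : |u - x_I| ≤ r := (abs_sub_left_of_mem_uIcc hu).trans htr
    have h₁ := abs_sub_abs_le_abs_sub (x - x_I) (x - u)
    have h₂ := abs_sub_le x x_I u
    rw [sub_sub_sub_cancel_left] at h₁
    rw [abs_sub_comm x_I] at h₂
    constructor <;> linarith [pi_lt_d2]
  simp only [one_div, ← cot_inv_eq_tan, inv_inv]
  refine (abs_sub_taylorWithinEval_univ_le (f := fun u => cot ((x - u) / 2))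
    (M := 2 ^ (m + 2) * C₀ / |x - x_I| ^ (m + 2)) (fun u hu => ?_) (fun u hu => ?_)).trans_eq
    (by ring)
  all_goals
    obtain ⟨hfar, hnear⟩ := hdist u hu
    have hxu : x ≠ u := sub_ne_zero.1 (abs_pos.1 (by linarith))
  · exact contDiffAt_cot_half_sub hxu hnear
  · calc |iteratedDeriv (m + 1) (fun u => cot ((x - u) / 2)) u|
        ≤ C₀ / |x - u| ^ (m + 2) := hderiv x u hxu hnear
      _ ≤ C₀ / (|x - x_I| / 2) ^ (m + 2) := by gcongr
      _ = 2 ^ (m + 2) * C₀ / |x - x_I| ^ (m + 2) := by rw [div_pow]; field_simp
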